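/- Every second-order ODE of the form s̈ = Ψ₁(s) + Ψ₂(s)ṡ² on ℝ (with Ψ₁, Ψ₂ : ℝ → ℝ smooth) is mechanical: all its solutions satisfy the Euler-Lagrange equation for the nondegenerate Lagrangian L(s, ṡ) = (1/2)M̃(s)ṡ² - Ṽ(s), where M̃(s) = exp(-2∫₀ˢ Ψ₂) > 0 and Ṽ(s) = -∫₀ˢ Ψ₁ M̃. -/

import Mathlib

open Real

/-- Virtual mass: `M̃(x) = exp(-2 ∫₀ˣ Ψ₂(τ) dτ)`. -/
noncomputable def vMass (Ψ₂ : ℝ → ℝ) (x : ℝ) : ℝ :=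
  Real.exp (-2 * ∫ τ in (0:ℝ)..x, Ψ₂ τ)

/-- Virtual potential: `Ṽ(x) = -∫₀ˣ Ψ₁(τ) M̃(τ) dτ`. -/
noncomputable def vPot (Ψ₁ Ψ₂ : ℝ → ℝ) (x : ℝ) : ℝ :=
  -∫ τ in (0:ℝ)..x, Ψ₁ τ * vMass Ψ₂ τ

/-- Energy: `Ẽ₀(x, ẋ) = (1/2) M̃(x) ẋ² + Ṽ(x)`. -/
noncomputable def energy (Ψ₁ Ψ₂ : ℝ → ℝ) (x v : ℝ) : ℝ :=
  (1/2) * vMass Ψ₂ x * v ^ 2 + vPot Ψ₁ Ψ₂ x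

lemma hasDerivAt_vMass {Ψ₂ : ℝ → ℝ} (h : Continuous Ψ₂) (x : ℝ) :
    HasDerivAt (vMass Ψ₂) (-2 * Ψ₂ x * vMass Ψ₂ x) x := by
  have hI : HasDerivAt (fun u => ∫ τ in (0:ℝ)..u, Ψ₂ τ) (Ψ₂ x) x :=
    (h.integral_hasStrictDerivAt 0 x).hasDerivAt
  have := ((hI.const_mul (-2 : ℝ)).exp)
  unfold vMass
  convert this using 1; ring

lemma continuous_vMass {Ψ₂ : ℝ → ℝ} (h : Continuous Ψ₂) :
    Continuous (vMass Ψ₂) := by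
  have hI : Continuous (fun u => ∫ τ in (0:ℝ)..u, Ψ₂ τ) :=
    continuous_iff_continuousAt.2 fun x =>
      (h.integral_hasStrictDerivAt 0 x).hasDerivAt.continuousAt
  exact Real.continuous_exp.comp (continuous_const.mul hI)

lemma hasDerivAt_vPot {Ψ₁ Ψ₂ : ℝ → ℝ} (h₁ : Continuous Ψ₁) (h₂ : Continuous Ψ₂) (x : ℝ) :
    HasDerivAt (vPot Ψ₁ Ψ₂) (-(Ψ₁ x * vMass Ψ₂ x)) x := by
  have hc : Continuous (fun τ => Ψ₁ τ * vMass Ψ₂ τ) := h₁.mul (continuous_vMass h₂)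
  have hI : HasDerivAt (fun u => ∫ τ in (0:ℝ)..u, Ψ₁ τ * vMass Ψ₂ τ) (Ψ₁ x * vMass Ψ₂ x) x :=
    (hc.integral_hasStrictDerivAt 0 x).hasDerivAt
  exact hI.neg

/-- Every system `s̈ = Ψ₁(s) + Ψ₂(s)ṡ²` on `ℝ` is mechanical: the Lagrangian
`L(s,ṡ) = (1/2)M̃(s)ṡ² - Ṽ(s)` is nondegenerate (`∂²L/∂ṡ² = M̃(s) > 0`) and
every solution satisfies the associated Euler-Lagrange equation
`(d/dt)(∂L/∂ṡ) - ∂L/∂s = 0`, where `∂L/∂ṡ(x,v) = M̃(x)v` and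
`∂L/∂x(x,v) = (1/2)M̃'(x)v² - Ṽ'(x)`. -/
theorem reduced_dynamics_on_line_mechanical (Ψ₁ Ψ₂ : ℝ → ℝ)
    (hs₁ : ContDiff ℝ (⊤ : ℕ∞) Ψ₁) (hs₂ : ContDiff ℝ (⊤ : ℕ∞) Ψ₂) :
    (∀ y : ℝ, 0 < vMass Ψ₂ y) ∧
    (∀ (a b : ℝ) (s s' s'' : ℝ → ℝ),
      (∀ t ∈ Set.Ioo a b, HasDerivAt s (s' t) t) →
      (∀ t ∈ Set.Ioo a b, HasDerivAt s' (s'' t) t) →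
      (∀ t ∈ Set.Ioo a b, s'' t = Ψ₁ (s t) + Ψ₂ (s t) * (s' t) ^ 2) →
      ∀ t ∈ Set.Ioo a b,
        deriv (fun τ => vMass Ψ₂ (s τ) * s' τ) t -
          ((1/2) * deriv (vMass Ψ₂) (s t) * (s' t) ^ 2 -
            deriv (vPot Ψ₁ Ψ₂) (s t)) = 0) := by
  have h₁ := hs₁.continuous
  have h₂ := hs₂.continuous
  refine ⟨fun y => Real.exp_pos _, fun a b s s' s'' hs hs' hode t ht => ?_⟩
  have hM := hasDerivAt_vMass h₂ (s t)
  have hV := hasDerivAt_vPot h₁ h₂ (s t)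
  have hcomp : HasDerivAt (fun τ => vMass Ψ₂ (s τ) * s' τ)
      ((-2 * Ψ₂ (s t) * vMass Ψ₂ (s t) * s' t) * s' t + vMass Ψ₂ (s t) * s'' t) t :=
    (hM.comp t (hs t ht)).mul (hs' t ht)
  rw [hcomp.deriv, hM.deriv, hV.deriv, hode t ht]
  ring
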